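/- One-point SPSA estimator bias bound: let f : X → ℝ be differentiable with L-Lipschitz gradient on a convex body X ⊆ ℝ^d containing a ball B_r(p₀) of radius r, and for 0 < δ < r define the query point x̂ = (1 − δ/r)x + (δ/r)(p₀ + r Z) where Z is uniform on {±e₁,…,±e_d}, and the estimator v̂ = (d/δ) f(x̂) Z. Then ‖E[v̂] − ∇f(x)‖ = O(δ); more precisely there is a constant C (depending on L, r, diam X) with ‖E[v̂] − ∇f(x)‖ ≤ CLδ. -/

import Mathlib

/-!
At the shrunk point `y = x - (δ/r)(x - p₀)` all `y ± δ eₖ` lie in `X`, being convex combinations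
of `x` and points of `B_r(p₀)`. A gradient that is `L`-Lipschitz along a segment makes `f` agree
with its first-order expansion up to `L‖v‖²`, so each central difference quotient at `y` is within
`Lδ` of the corresponding partial derivative, and the whole vector within `√d Lδ` of `∇f(y)`.
Finally `‖∇f(y) - ∇f(x)‖ ≤ L‖y - x‖ = L (δ/r) ‖x - p₀‖`, which compactness of `X` bounds.
-/

open scoped RealInnerProductSpace

section LipschitzGradient

variable {E : Type*} [NormedAddCommGroup E] [InnerProductSpace ℝ E] [CompleteSpace E]
  {s : Set E} {f : E → ℝ} {gf : E → E} {L : ℝ}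

theorem Convex.abs_sub_sub_inner_le_of_lipschitz_gradient (hs : Convex ℝ s)
    (hgrad : ∀ x ∈ s, HasGradientAt f (gf x) x)
    (hLip : ∀ x ∈ s, ∀ y ∈ s, ‖gf y - gf x‖ ≤ L * ‖y - x‖) (hL : 0 ≤ L)
    {y v : E} (hy : y ∈ s) (hyv : y + v ∈ s) :
    |f (y + v) - f y - ⟪gf y, v⟫| ≤ L * ‖v‖ ^ 2 := by
  have hseg : segment ℝ y (y + v) ⊆ s := hs.segment_subset hy hyv
  have hderiv : ∀ z ∈ segment ℝ y (y + v),
      HasFDerivWithinAt f (InnerProductSpace.toDual ℝ E (gf z)) (segment ℝ y (y + v)) z :=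
    fun z hz => (hgrad z (hseg hz)).hasFDerivAt.hasFDerivWithinAt
  have hbound : ∀ z ∈ segment ℝ y (y + v),
      ‖InnerProductSpace.toDual ℝ E (gf z) - InnerProductSpace.toDual ℝ E (gf y)‖ ≤ L * ‖v‖ := by
    intro z hz
    rw [← map_sub, LinearIsometryEquiv.norm_map]
    calc ‖gf z - gf y‖ ≤ L * ‖z - y‖ := hLip y hy z (hseg hz)
      _ ≤ L * ‖v‖ := by
        gcongr
        simpa using norm_sub_le_of_mem_segment hz
  have hmvt := (convex_segment y (y + v)).norm_image_sub_le_of_norm_hasFDerivWithin_le'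
    hderiv hbound (left_mem_segment ℝ y (y + v)) (right_mem_segment ℝ y (y + v))
  simpa [InnerProductSpace.toDual_apply_apply, sq, mul_assoc] using hmvt

theorem Convex.abs_sub_sub_two_mul_inner_le_of_lipschitz_gradient (hs : Convex ℝ s)
    (hgrad : ∀ x ∈ s, HasGradientAt f (gf x) x)
    (hLip : ∀ x ∈ s, ∀ y ∈ s, ‖gf y - gf x‖ ≤ L * ‖y - x‖) (hL : 0 ≤ L)
    {y v : E} (hy : y ∈ s) (hyv : y + v ∈ s) (hyv' : y - v ∈ s) :
    |f (y + v) - f (y - v) - 2 * ⟪gf y, v⟫| ≤ 2 * L * ‖v‖ ^ 2 := by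
  have hplus := hs.abs_sub_sub_inner_le_of_lipschitz_gradient hgrad hLip hL hy hyv
  have hminus := hs.abs_sub_sub_inner_le_of_lipschitz_gradient hgrad hLip hL hy
    (v := -v) (by rwa [← sub_eq_add_neg])
  rw [← sub_eq_add_neg, inner_neg_right, norm_neg] at hminus
  calc |f (y + v) - f (y - v) - 2 * ⟪gf y, v⟫|
      = |(f (y + v) - f y - ⟪gf y, v⟫) - (f (y - v) - f y - -⟪gf y, v⟫)| := by ring_nf
    _ ≤ |f (y + v) - f y - ⟪gf y, v⟫| + |f (y - v) - f y - -⟪gf y, v⟫| := abs_sub _ _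
    _ ≤ 2 * L * ‖v‖ ^ 2 := by linarith

end LipschitzGradient

theorem Convex.sub_smul_sub_add_smul_mem_of_closedBall_subset {E : Type*}
    [NormedAddCommGroup E] [NormedSpace ℝ E] {X : Set E} (hX : Convex ℝ X) {p0 : E} {r : ℝ}
    (hr : 0 < r) (hball : Metric.closedBall p0 r ⊆ X) {x : E} (hx : x ∈ X) {δ : ℝ}
    (hδ : 0 ≤ δ) (hδr : δ ≤ r) {u : E} (hu : ‖u‖ ≤ 1) :
    x - (δ / r) • (x - p0) + δ • u ∈ X := by
  have hq : p0 + r • u ∈ Metric.closedBall p0 r := by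
    rw [Metric.mem_closedBall, dist_eq_norm, add_sub_cancel_left, norm_smul,
      Real.norm_of_nonneg hr.le]
    nlinarith
  have hcomb := hX hx (hball hq) (by rw [sub_nonneg, div_le_one hr]; exact hδr)
    (div_nonneg hδ hr.le) (sub_add_cancel 1 (δ / r))
  convert hcomb using 1
  rw [smul_add, smul_smul, div_mul_cancel₀ δ hr.ne', sub_smul, one_smul, smul_sub]
  abel

theorem EuclideanSpace.norm_le_sqrt_card_mul_of_forall_abs_le {ι : Type*} [Fintype ι]
    {x : EuclideanSpace ℝ ι} {ε : ℝ} (hε : 0 ≤ ε) (h : ∀ i, |x i| ≤ ε) :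
    ‖x‖ ≤ √(Fintype.card ι) * ε := by
  calc ‖x‖ = √(∑ i, ‖x i‖ ^ 2) := EuclideanSpace.norm_eq x
    _ ≤ √(∑ _ : ι, ε ^ 2) := by
      gcongr with i
      exact h i
    _ = √(Fintype.card ι) * ε := by
      rw [Finset.sum_const, Finset.card_univ, nsmul_eq_mul, Real.sqrt_mul (Nat.cast_nonneg _),
        Real.sqrt_sq hε]

section CentralDifference

variable {ι : Type*} [Fintype ι] [DecidableEq ι]

/-- `E[v̂]` for the one-point estimator `v̂ = (d/δ) f(y + δ Z) Z`, `Z` uniform on `{±eₖ}`. -/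
noncomputable def centralDifferenceGradient (f : EuclideanSpace ℝ ι → ℝ) (δ : ℝ)
    (y : EuclideanSpace ℝ ι) : EuclideanSpace ℝ ι :=
  ∑ k : ι, ((2 * δ)⁻¹ * (f (y + δ • EuclideanSpace.single k (1 : ℝ))
    - f (y - δ • EuclideanSpace.single k (1 : ℝ)))) • EuclideanSpace.single k (1 : ℝ)

theorem centralDifferenceGradient_apply (f : EuclideanSpace ℝ ι → ℝ) (δ : ℝ)
    (y : EuclideanSpace ℝ ι) (k : ι) :
    centralDifferenceGradient f δ y k = (2 * δ)⁻¹ * (f (y + δ • EuclideanSpace.single k (1 : ℝ))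
      - f (y - δ • EuclideanSpace.single k (1 : ℝ))) := by
  simp [centralDifferenceGradient, Pi.single_apply]

variable {s : Set (EuclideanSpace ℝ ι)} {f : EuclideanSpace ℝ ι → ℝ}
  {gf : EuclideanSpace ℝ ι → EuclideanSpace ℝ ι} {L : ℝ}

theorem Convex.norm_centralDifferenceGradient_sub_le (hs : Convex ℝ s)
    (hgrad : ∀ x ∈ s, HasGradientAt f (gf x) x)
    (hLip : ∀ x ∈ s, ∀ y ∈ s, ‖gf y - gf x‖ ≤ L * ‖y - x‖) (hL : 0 ≤ L)
    {δ : ℝ} (hδ : 0 < δ) {y : EuclideanSpace ℝ ι} (hy : y ∈ s)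
    (hys : ∀ k, y + δ • EuclideanSpace.single k (1 : ℝ) ∈ s ∧
      y - δ • EuclideanSpace.single k (1 : ℝ) ∈ s) :
    ‖centralDifferenceGradient f δ y - gf y‖ ≤ √(Fintype.card ι) * (L * δ) := by
  refine EuclideanSpace.norm_le_sqrt_card_mul_of_forall_abs_le (by positivity) fun k => ?_
  have hdiff := hs.abs_sub_sub_two_mul_inner_le_of_lipschitz_gradient hgrad hLip hL hy
    (hys k).1 (hys k).2
  rw [real_inner_smul_right, EuclideanSpace.inner_single_right, norm_smul, PiLp.norm_single,
    norm_one, mul_one, Real.norm_of_nonneg hδ.le, one_mul, conj_trivial] at hdiff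
  rw [PiLp.sub_apply, centralDifferenceGradient_apply]
  generalize f (y + δ • EuclideanSpace.single k 1) - f (y - δ • EuclideanSpace.single k 1) = Δ
    at hdiff ⊢
  calc |(2 * δ)⁻¹ * Δ - gf y k| = |(2 * δ)⁻¹ * (Δ - 2 * (δ * gf y k))| := by
        congr 1
        field_simp
    _ = (2 * δ)⁻¹ * |Δ - 2 * (δ * gf y k)| := by rw [abs_mul, abs_of_pos (by positivity)]
    _ ≤ (2 * δ)⁻¹ * (2 * L * δ ^ 2) := by gcongr
    _ = L * δ := by field_simp

end CentralDifference

theorem stmt19_general {d : ℕ} (X : Set (EuclideanSpace ℝ (Fin d)))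
    (hXconv : Convex ℝ X) (hXcpt : IsCompact X)
    (p0 : EuclideanSpace ℝ (Fin d)) (r : ℝ) (hr : 0 < r) (hball : Metric.closedBall p0 r ⊆ X)
    (Us : Set (EuclideanSpace ℝ (Fin d))) (hXU : X ⊆ Us)
    (f : EuclideanSpace ℝ (Fin d) → ℝ) (gf : EuclideanSpace ℝ (Fin d) → EuclideanSpace ℝ (Fin d)) (L : ℝ) (hL : 0 < L)
    (hgrad : ∀ x ∈ Us, HasGradientAt f (gf x) x)
    (hLip : ∀ x ∈ Us, ∀ y ∈ Us, ‖gf y - gf x‖ ≤ L * ‖y - x‖) :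
    ∃ C > (0 : ℝ), ∀ x ∈ X, ∀ δ : ℝ, 0 < δ → δ < r →
      ‖(∑ k : Fin d, ((2 * δ)⁻¹ *
            (f ((x - (δ / r) • (x - p0)) + δ • EuclideanSpace.single k (1 : ℝ))
              - f ((x - (δ / r) • (x - p0)) - δ • EuclideanSpace.single k (1 : ℝ)))) •
          EuclideanSpace.single k (1 : ℝ))
        - gf x‖ ≤ C * L * δ := by
  have hgradX : ∀ x ∈ X, HasGradientAt f (gf x) x := fun x hx => hgrad x (hXU hx)
  have hLipX : ∀ x ∈ X, ∀ y ∈ X, ‖gf y - gf x‖ ≤ L * ‖y - x‖ :=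
    fun x hx y hy => hLip x (hXU hx) y (hXU hy)
  obtain ⟨R, hR, hXR⟩ := hXcpt.isBounded.subset_closedBall_lt 0 p0
  refine ⟨√d + R / r, by positivity, fun x hx δ hδ hδr => ?_⟩
  set y := x - (δ / r) • (x - p0)
  have hmem : ∀ u, ‖u‖ ≤ 1 → y + δ • u ∈ X := fun u hu =>
    hXconv.sub_smul_sub_add_smul_mem_of_closedBall_subset hr hball hx hδ.le hδr.le hu
  have hy : y ∈ X := by simpa using hmem 0 (by simp)
  have hestimate : ‖centralDifferenceGradient f δ y - gf y‖ ≤ √d * (L * δ) := by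
    simpa using hXconv.norm_centralDifferenceGradient_sub_le hgradX hLipX hL.le hδ hy fun k =>
      ⟨hmem _ (by simp),
        by simpa [sub_eq_add_neg] using hmem (-EuclideanSpace.single k 1) (by simp)⟩
  have hshift : ‖gf y - gf x‖ ≤ R / r * (L * δ) :=
    calc ‖gf y - gf x‖ ≤ L * ‖y - x‖ := hLipX x hx y hy
      _ = L * (δ / r * ‖x - p0‖) := by
        rw [show y - x = -((δ / r) • (x - p0)) by simp [y], norm_neg, norm_smul,
          Real.norm_of_nonneg (by positivity)]
      _ ≤ L * (δ / r * R) := by gcongr; simpa [dist_eq_norm] using hXR hx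
      _ = R / r * (L * δ) := by ring
  calc ‖centralDifferenceGradient f δ y - gf x‖
      ≤ ‖centralDifferenceGradient f δ y - gf y‖ + ‖gf y - gf x‖ :=
        norm_sub_le_norm_sub_add_norm_sub _ _ _
    _ ≤ √d * (L * δ) + R / r * (L * δ) := add_le_add hestimate hshift
    _ = (√d + R / r) * L * δ := by ring

theorem stmt19 {d : ℕ} (X : Set (EuclideanSpace ℝ (Fin d)))
    (hXconv : Convex ℝ X) (hXcpt : IsCompact X)
    (p0 : EuclideanSpace ℝ (Fin d)) (r : ℝ) (hr : 0 < r) (hball : Metric.closedBall p0 r ⊆ X)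
    (Us : Set (EuclideanSpace ℝ (Fin d))) (hUopen : IsOpen Us) (hXU : X ⊆ Us)
    (f : EuclideanSpace ℝ (Fin d) → ℝ) (gf : EuclideanSpace ℝ (Fin d) → EuclideanSpace ℝ (Fin d)) (L : ℝ) (hL : 0 < L)
    (hgrad : ∀ x ∈ Us, HasGradientAt f (gf x) x)
    (hLip : ∀ x ∈ Us, ∀ y ∈ Us, ‖gf y - gf x‖ ≤ L * ‖y - x‖) :
    ∃ C > (0 : ℝ), ∀ x ∈ X, ∀ δ : ℝ, 0 < δ → δ < r →
      ‖(∑ k : Fin d, ((2 * δ)⁻¹ *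
            (f ((x - (δ / r) • (x - p0)) + δ • EuclideanSpace.single k (1 : ℝ))
              - f ((x - (δ / r) • (x - p0)) - δ • EuclideanSpace.single k (1 : ℝ)))) •
          EuclideanSpace.single k (1 : ℝ))
        - gf x‖ ≤ C * L * δ :=
  stmt19_general X hXconv hXcpt p0 r hr hball Us hXU f gf L hL hgrad hLip
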